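/- Let X ∈ G_q(n,k) have extended representation with columns ((v_n,X_n),...,(v_1,X_1)), and let w_j = ∑_{ℓ=1}^j v_ℓ with w_0 = 0. Then the number of k-dimensional subspaces Y of F_q^n with Y < X in the extended-representation lexicographic order equals ∑_{j=1}^n ( v_j·q^{k-w_{j-1}} + (1-v_j)·{X_j}/q^{w_{j-1}} ) · [n-j choose k-w_{j-1}]_q, where {X_j} is the value of the column X_j read as a base-q integer. -/

import Mathlib

open Finset
open scoped Classical

/-- The Gaussian binomial coefficient `[n choose k]_q`. -/
noncomputable def gaussQ (q n k : ℕ) : ℚ :=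
  ∏ i ∈ Finset.range k, (((q : ℚ) ^ (n - i) - 1) / ((q : ℚ) ^ (k - i) - 1))

/-- `M` is in reduced row echelon form with pivot columns `piv`. -/
def IsRREF {Fq : Type} [Field Fq] {k n : ℕ}
    (M : Matrix (Fin k) (Fin n) Fq) (piv : Fin k → Fin n) : Prop :=
  StrictMono piv ∧ (∀ i, M i (piv i) = 1) ∧
    (∀ i (j : Fin n), (j : ℕ) < (piv i : ℕ) → M i j = 0) ∧
    (∀ i i', i' ≠ i → M i' (piv i) = 0)

/-- The value `{X_c}` of column `c` of `N` read as a base-`q` integer (top entry most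
significant), where entries of `F_q` are identified with digits via the bijection `φ`. -/
noncomputable def colVal {Fq : Type} [Field Fq] [Fintype Fq] {k n : ℕ}
    (φ : Fq ≃ Fin (Fintype.card Fq)) (N : Matrix (Fin k) (Fin n) Fq) (c : Fin n) : ℕ :=
  ∑ i : Fin k, (φ (N i c) : ℕ) * (Fintype.card Fq) ^ (k - 1 - (i : ℕ))

/-- The value of column `c` of the extended representation (identifying-vector bit on top,
most significant). -/
noncomputable def extVal {Fq : Type} [Field Fq] [Fintype Fq] {k n : ℕ}
    (φ : Fq ≃ Fin (Fintype.card Fq)) (N : Matrix (Fin k) (Fin n) Fq)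
    (piv' : Fin k → Fin n) (c : Fin n) : ℕ :=
  (if ∃ i, piv' i = c then (Fintype.card Fq) ^ k else 0) + colVal φ N c

/-- The extended-representation lexicographic order: `(N,piv') < (M,piv)` iff at the
rightmost column (largest Lean index = least paper index) where the extended
representations differ, the column of `(N,piv')` has smaller base-`q` value. -/
def ExtLt {Fq : Type} [Field Fq] [Fintype Fq] {k n : ℕ}
    (φ : Fq ≃ Fin (Fintype.card Fq))
    (N : Matrix (Fin k) (Fin n) Fq) (piv' : Fin k → Fin n)
    (M : Matrix (Fin k) (Fin n) Fq) (piv : Fin k → Fin n) : Prop :=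
  ∃ c : Fin n, (∀ c' : Fin n, c < c' →
      (((∃ i, piv' i = c') ↔ (∃ i, piv i = c')) ∧ ∀ i, N i c' = M i c')) ∧
    extVal φ N piv' c < extVal φ M piv c

/-!
A subspace has a unique RREF, so we count RREF pairs `(N, piv')` below `(M, piv)`. Such a pair is
below at exactly one column `c`: the columns right of `c` agree and column `c` is smaller. Agreement
right of `c` forces the rows of `N` with pivots right of `c` (the last `w` rows) to be those of
`M`, and leaves no room for a pivot of `N` at `c`. The first `k - w` rows are then an arbitrary RREF
of shape `(k - w) × c` left of `c`, counted by the Gaussian binomial `[c, k - w]_q` through the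
`q`-Pascal rule, together with a top part of column `c` whose base-`q` value is below that of `M`
(any of the `q^(k-w)` values when `c` is a pivot column of `M`).
-/

section GaussianBinomial

lemma gaussQ_zero_right (q c : ℕ) : gaussQ q c 0 = 1 := by
  simp [gaussQ]

lemma gaussQ_eq_zero_of_lt {q c r : ℕ} (h : c < r) : gaussQ q c r = 0 :=
  Finset.prod_eq_zero (Finset.mem_range.2 h) (by simp)

lemma gaussQ_succ_succ (q c r : ℕ) :
    gaussQ q (c + 1) (r + 1)
      = ((q : ℚ) ^ (c + 1) - 1) / ((q : ℚ) ^ (r + 1) - 1) * gaussQ q c r := by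
  simp only [gaussQ, Finset.prod_range_succ', Nat.sub_zero, Nat.add_sub_add_right]
  ring

lemma gaussQ_succ_right (q c r : ℕ) :
    gaussQ q c (r + 1) = gaussQ q c r * ((q : ℚ) ^ (c - r) - 1) / ((q : ℚ) ^ (r + 1) - 1) := by
  simp only [gaussQ, Finset.prod_div_distrib]
  rw [Finset.prod_range_succ, Finset.prod_range_succ' (fun i => (q : ℚ) ^ (r + 1 - i) - 1)]
  simp only [Nat.add_sub_add_right, Nat.sub_zero]
  rw [← div_mul_div_comm, mul_div_assoc]

lemma gaussQ_pascal {q : ℕ} (hq : 1 < q) {c r : ℕ} (hrc : r ≤ c) :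
    gaussQ q (c + 1) (r + 1) = (q : ℚ) ^ (c - r) * gaussQ q c r + gaussQ q c (r + 1) := by
  have hq' : (1 : ℚ) < q := by exact_mod_cast hq
  have hden : (q : ℚ) ^ (r + 1) - 1 ≠ 0 := sub_ne_zero.2 (one_lt_pow₀ hq' r.succ_ne_zero).ne'
  have hpow : (q : ℚ) ^ (c + 1) = (q : ℚ) ^ (c - r) * (q : ℚ) ^ (r + 1) := by
    rw [← pow_add]; congr 1; omega
  rw [gaussQ_succ_succ, gaussQ_succ_right, hpow]
  field_simp
  ring

end GaussianBinomial

section Digits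

variable {α : Type*} [Fintype α] (φ : α ≃ Fin (Fintype.card α))

noncomputable def digitVal {r : ℕ} (b : Fin r → α) : ℕ :=
  ∑ i : Fin r, (φ (b i) : ℕ) * Fintype.card α ^ (r - 1 - (i : ℕ))

noncomputable def digitEquiv (r : ℕ) : (Fin r → α) ≃ Fin (Fintype.card α ^ r) :=
  (Equiv.arrowCongr Fin.revPerm φ).trans finFunctionFinEquiv

lemma digitEquiv_val {r : ℕ} (b : Fin r → α) : (digitEquiv φ r b : ℕ) = digitVal φ b := by
  rw [digitEquiv, Equiv.trans_apply, finFunctionFinEquiv_apply, digitVal]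
  refine Fintype.sum_equiv Fin.revPerm _ _ fun i => ?_
  simp only [Equiv.arrowCongr_apply, Function.comp_apply, Fin.revPerm_symm, Fin.revPerm_apply,
    Fin.val_rev]
  congr 2
  omega

lemma digitVal_lt {r : ℕ} (b : Fin r → α) : digitVal φ b < Fintype.card α ^ r :=
  digitEquiv_val φ b ▸ (digitEquiv φ r b).isLt

lemma card_digitVal_lt {r A : ℕ} (hA : A ≤ Fintype.card α ^ r) :
    Nat.card {b : Fin r → α // digitVal φ b < A} = A := by
  rw [Nat.card_congr (Equiv.subtypeEquiv (q := fun m : Fin _ => (m : ℕ) < A) (digitEquiv φ r)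
    fun b => by rw [digitEquiv_val]), Nat.card_eq_fintype_card, Fintype.card_fin_lt_of_le hA]

lemma digitVal_eq_mul_of_tail {k r : ℕ} (hrk : r ≤ k) {v : Fin k → α}
    (hv : ∀ i : Fin k, r ≤ (i : ℕ) → (φ (v i) : ℕ) = 0) :
    digitVal φ v
      = Fintype.card α ^ (k - r) * digitVal φ (fun i : Fin r => v (Fin.castLE hrk i)) := by
  rw [digitVal, digitVal, Finset.mul_sum, ← Finset.sum_subset (Finset.subset_univ
    (Finset.univ.map (Fin.castLEEmb hrk))), Finset.sum_map]
  · refine Finset.sum_congr rfl fun i _ => ?_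
    rw [Fin.castLEEmb_apply, Fin.val_castLE, mul_left_comm, ← pow_add]
    congr 2
    omega
  · intro i _ hi
    have : r ≤ (i : ℕ) := by
      by_contra h
      exact hi (Finset.mem_map.2 ⟨⟨i, by omega⟩, Finset.mem_univ _, Fin.ext rfl⟩)
    rw [hv i this, zero_mul]

end Digits

lemma colVal_eq_digitVal {Fq : Type} [Field Fq] [Fintype Fq] {k n : ℕ}
    (φ : Fq ≃ Fin (Fintype.card Fq)) (N : Matrix (Fin k) (Fin n) Fq) (c : Fin n) :
    colVal φ N c = digitVal φ fun i => N i c :=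
  rfl

lemma card_subtype_exists_eq_sum {α ι : Type*} [Fintype ι] [Finite α] (P : ι → α → Prop)
    (huniq : ∀ x c c', P c x → P c' x → c = c') :
    Nat.card {x // ∃ c, P c x} = ∑ c, Nat.card {x // P c x} := by
  rw [← Nat.card_sigma]
  refine (Nat.card_eq_of_bijective (fun y => ⟨y.2.1, y.1, y.2.2⟩)
      ⟨fun ⟨c, x, hx⟩ ⟨c', x', hx'⟩ h => ?_, fun ⟨x, c, hx⟩ => ⟨⟨c, x, hx⟩, rfl⟩⟩).symm
  obtain rfl : x = x' := congrArg Subtype.val h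
  obtain rfl := huniq x c c' hx hx'
  rfl

lemma Fin.mem_iff_le_of_isUpperSet {k : ℕ} {s : Finset (Fin k)}
    (hs : IsUpperSet (s : Set (Fin k))) (i : Fin k) : i ∈ s ↔ k - s.card ≤ i := by
  constructor
  · intro hi
    have := Finset.card_le_card fun j (hj : j ∈ Finset.Ici i) => hs (Finset.mem_Ici.1 hj) hi
    rw [Fin.card_Ici] at this
    omega
  · intro hi
    by_contra hni
    have := Finset.card_le_card fun j (hj : j ∈ s) =>
      Finset.mem_Ioi.2 (lt_of_not_ge fun hji => hni (hs hji hj))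
    rw [Fin.card_Ioi] at this
    omega

namespace IsRREF

variable {Fq : Type} [Field Fq] {k n : ℕ} {N : Matrix (Fin k) (Fin n) Fq} {piv : Fin k → Fin n}

lemma apply_pivot (h : IsRREF N piv) (i i' : Fin k) :
    N i' (piv i) = if i' = i then 1 else 0 := by
  split_ifs with hi
  · exact hi ▸ h.2.1 i
  · exact h.2.2.2 i i' hi

lemma eq_of_apply_pivot_ne_zero (h : IsRREF N piv) {i i' : Fin k} (hne : N i (piv i') ≠ 0) :
    i = i' := by
  by_contra hii
  exact hne (h.2.2.2 i' i hii)

lemma sum_smul_apply_pivot (h : IsRREF N piv) (a : Fin k → Fq) (j : Fin k) :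
    (∑ i, a i • N i) (piv j) = a j := by
  simp [Finset.sum_apply, h.apply_pivot]

lemma exists_pivot_eq_of_mem_span (h : IsRREF N piv) {x : Fin n → Fq}
    (hx : x ∈ Submodule.span Fq (Set.range fun i => N i)) {j₀ : Fin n} (hj₀ : x j₀ ≠ 0)
    (hlead : ∀ j < j₀, x j = 0) : ∃ i, piv i = j₀ := by
  obtain ⟨a, rfl⟩ := (Submodule.mem_span_range_iff_exists_fun Fq).1 hx
  have hsupp : (Finset.univ.filter fun i => a i ≠ 0).Nonempty := by
    by_contra hempty
    simp only [Finset.not_nonempty_iff_eq_empty, Finset.filter_eq_empty_iff, Finset.mem_univ,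
      true_implies, not_not] at hempty
    simp [hempty] at hj₀
  obtain ⟨i₀, hi₀, hmin⟩ := Finset.exists_min_image _ id hsupp
  have hai₀ : a i₀ ≠ 0 := (Finset.mem_filter.1 hi₀).2
  have hbefore : ∀ j < piv i₀, (∑ i, a i • N i) j = 0 := fun j hj => by
    refine (Finset.sum_apply j _ _).trans (Finset.sum_eq_zero fun i _ => ?_)
    by_cases hai : a i = 0
    · simp [hai]
    · have : i₀ ≤ i := hmin i (Finset.mem_filter.2 ⟨Finset.mem_univ i, hai⟩)
      simp [h.2.2.1 i j (lt_of_lt_of_le hj (h.1.monotone this))]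
  refine ⟨i₀, le_antisymm ?_ ?_⟩
  · by_contra! hlt
    exact hj₀ (hbefore j₀ hlt)
  · by_contra! hlt
    exact hai₀ (h.sum_smul_apply_pivot a i₀ ▸ hlead _ hlt)

lemma eq_of_span_eq {N' : Matrix (Fin k) (Fin n) Fq} {piv' : Fin k → Fin n}
    (h : IsRREF N piv) (h' : IsRREF N' piv')
    (hspan : Submodule.span Fq (Set.range fun i => N i)
      = Submodule.span Fq (Set.range fun i => N' i)) :
    N = N' ∧ piv = piv' := by
  have hmem : ∀ j, N j ∈ Submodule.span Fq (Set.range fun i => N' i) := fun j =>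
    hspan ▸ Submodule.subset_span ⟨j, rfl⟩
  have hmem' : ∀ j, N' j ∈ Submodule.span Fq (Set.range fun i => N i) := fun j =>
    hspan ▸ Submodule.subset_span ⟨j, rfl⟩
  have hpiv : piv = piv' := by
    refine (h.1.range_inj h'.1).1 (Set.Subset.antisymm ?_ ?_)
    · rintro _ ⟨j, rfl⟩
      exact h'.exists_pivot_eq_of_mem_span (hmem j) (by simp [h.2.1 j]) (h.2.2.1 j)
    · rintro _ ⟨j, rfl⟩
      exact h.exists_pivot_eq_of_mem_span (hmem' j) (by simp [h'.2.1 j]) (h'.2.2.1 j)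
  subst hpiv
  refine ⟨funext fun j => ?_, rfl⟩
  obtain ⟨a, ha⟩ := (Submodule.mem_span_range_iff_exists_fun Fq).1 (hmem j)
  have hcoeff : a = fun i => if j = i then 1 else 0 := funext fun i => by
    rw [← h'.sum_smul_apply_pivot a i, ha, h.apply_pivot]
  rw [← ha, Finset.sum_eq_single j (fun i _ hij => by simp [hcoeff, Ne.symm hij]) (by simp)]
  simp [hcoeff]

end IsRREF

section RrefCount

variable (Fq : Type) [Field Fq]

abbrev RrefPair (r c : ℕ) :=
  {p : Matrix (Fin r) (Fin c) Fq × (Fin r → Fin c) // IsRREF p.1 p.2}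

lemma card_rrefPair_zero_left (c : ℕ) : Nat.card (RrefPair Fq 0 c) = 1 := by
  rw [Nat.card_eq_one_iff_unique]
  refine ⟨⟨fun a b =>
      Subtype.ext (Prod.ext (funext fun i => i.elim0) (funext fun i => i.elim0))⟩,
    ⟨⟨(Matrix.of fun i => i.elim0, Fin.elim0),
      fun a => a.elim0, fun i => i.elim0, fun i => i.elim0, fun i => i.elim0⟩⟩⟩

lemma card_rrefPair_eq_zero_of_lt {r c : ℕ} (h : c < r) : Nat.card (RrefPair Fq r c) = 0 := by
  rw [Nat.card_eq_zero]
  refine Or.inl ⟨fun p => ?_⟩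
  have := Fintype.card_le_of_injective _ p.2.1.injective
  simp only [Fintype.card_fin] at this
  omega

variable {Fq}

lemma isRREF_cons_zero_iff {r c : ℕ} {N : Matrix (Fin r) (Fin c) Fq} {piv : Fin r → Fin c} :
    IsRREF (Matrix.of fun i => Fin.cons 0 (N i) : Matrix (Fin r) (Fin (c + 1)) Fq)
      (fun i => (piv i).succ) ↔ IsRREF N piv := by
  simp [IsRREF, StrictMono, Fin.forall_fin_succ]

lemma isRREF_cons_pivot_iff {r c : ℕ} {N : Matrix (Fin r) (Fin c) Fq} {piv : Fin r → Fin c}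
    {v : Fin c → Fq} :
    IsRREF (Matrix.of (Fin.cons (Fin.cons 1 v) fun i => Fin.cons 0 (N i)) :
        Matrix (Fin (r + 1)) (Fin (c + 1)) Fq) (Fin.cons 0 fun i => (piv i).succ) ↔
      IsRREF N piv ∧ ∀ i, v (piv i) = 0 := by
  simp only [IsRREF, StrictMono, Fin.forall_fin_succ]
  simp [Fin.succ_ne_zero, (Fin.succ_ne_zero _).symm, forall_and]
  tauto

lemma card_rrefPair_firstPivot_ne_zero {r c : ℕ} :
    Nat.card {p : RrefPair Fq (r + 1) (c + 1) // p.1.2 0 ≠ 0}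
      = Nat.card (RrefPair Fq (r + 1) c) := by
  symm
  refine Nat.card_eq_of_bijective
    (fun x => ⟨⟨(Matrix.of fun i => Fin.cons 0 (x.1.1 i), fun i => (x.1.2 i).succ),
      isRREF_cons_zero_iff.2 x.2⟩, Fin.succ_ne_zero _⟩) ⟨fun x y hxy => ?_, fun p => ?_⟩
  · simp only [Subtype.mk.injEq, Prod.mk.injEq] at hxy
    refine Subtype.ext (Prod.ext (funext fun i => funext fun j => ?_)
      (funext fun i => Fin.succ_injective _ (congrFun hxy.2 i)))
    simpa using congrFun (congrFun hxy.1 i) j.succ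
  · obtain ⟨⟨⟨P, π⟩, hP⟩, h0⟩ := p
    have hpos (i : Fin (r + 1)) : 0 < π i :=
      lt_of_lt_of_le (Fin.pos_iff_ne_zero.2 h0) (hP.1.monotone (Fin.zero_le i))
    have hrow : (Matrix.of fun i => Fin.cons 0 fun j => P i j.succ) = P :=
      funext fun i => funext fun j => Fin.cases (hP.2.2.1 i 0 (hpos i)).symm (fun _ => rfl) j
    have hpiv : (fun i => ((π i).pred (hpos i).ne').succ) = π := funext fun i => Fin.succ_pred _ _
    have hx : IsRREF (Matrix.of fun i j => P i j.succ) (fun i => (π i).pred (hpos i).ne') := by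
      rw [← isRREF_cons_zero_iff]
      convert hP using 1
      exact hrow
    exact ⟨⟨(_, _), hx⟩, Subtype.ext (Subtype.ext (Prod.ext hrow hpiv))⟩

variable [Fintype Fq]

lemma card_vanishing_on_range {m r : ℕ} {f : Fin r → Fin m} (hf : Function.Injective f) :
    Nat.card {t : Fin m → Fq // ∀ i, t (f i) = 0} = Fintype.card Fq ^ (m - r) := by
  have hfilter : (Finset.univ.filter fun t : Fin m → Fq => ∀ i, t (f i) = 0)
      = Fintype.piFinset fun j => if j ∈ Set.range f then {0} else Finset.univ := by
    ext t
    simp only [Finset.mem_filter, Finset.mem_univ, true_and, Fintype.mem_piFinset]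
    constructor
    · rintro ht j
      split_ifs with hj
      · obtain ⟨i, rfl⟩ := hj
        simp [ht i]
      · exact Finset.mem_univ _
    · intro ht i
      simpa using ht (f i)
  have hcompl : (Finset.univ.filter fun j => j ∉ Set.range f) = (Finset.univ.image f)ᶜ := by
    ext; simp
  rw [Nat.card_eq_fintype_card, Fintype.card_subtype, hfilter, Fintype.card_piFinset]
  simp only [apply_ite Finset.card, Finset.card_singleton, Finset.card_univ, Finset.prod_ite,
    Finset.prod_const_one, one_mul, Finset.prod_const, hcompl, Finset.card_compl,
    Finset.card_image_of_injective _ hf, Finset.card_univ, Fintype.card_fin]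

lemma card_rrefPair_firstPivot_eq_zero {r c : ℕ} :
    Nat.card {p : RrefPair Fq (r + 1) (c + 1) // p.1.2 0 = 0}
      = Fintype.card Fq ^ (c - r) * Nat.card (RrefPair Fq r c) := by
  have hcard := Nat.card_eq_of_bijective
    (α := Σ x : RrefPair Fq r c, {v : Fin c → Fq // ∀ i, v (x.1.2 i) = 0})
    (β := {p : RrefPair Fq (r + 1) (c + 1) // p.1.2 0 = 0})
    (fun x => ⟨⟨(Matrix.of (Fin.cons (Fin.cons 1 x.2.1) fun i => Fin.cons 0 (x.1.1.1 i)),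
      Fin.cons 0 fun i => (x.1.1.2 i).succ), isRREF_cons_pivot_iff.2 ⟨x.1.2, x.2.2⟩⟩, rfl⟩)
    ⟨?_, ?_⟩
  · rw [← hcard, Nat.card_sigma,
      Finset.sum_congr rfl fun x _ => card_vanishing_on_range x.2.1.injective,
      Finset.sum_const, Finset.card_univ, smul_eq_mul, mul_comm, Nat.card_eq_fintype_card]
  · rintro ⟨⟨⟨N, π⟩, hN⟩, v, hv⟩ ⟨⟨⟨N', π'⟩, hN'⟩, v', hv'⟩ h
    obtain ⟨hmat, hpiv⟩ := Prod.mk.inj (congrArg (fun p => p.1.1) h)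
    obtain ⟨hrow₀, hrows⟩ := Fin.cons_inj.1 (Matrix.of.injective hmat)
    obtain rfl : v = v' := (Fin.cons_inj.1 hrow₀).2
    obtain rfl : N = N' := funext fun i => (Fin.cons_inj.1 (congrFun hrows i)).2
    obtain rfl : π = π' :=
      funext fun i => Fin.succ_injective _ (congrFun (Fin.cons_inj.1 hpiv).2 i)
    rfl
  · rintro ⟨⟨⟨P, π⟩, hP⟩, h0⟩
    have hpos (i : Fin r) : 0 < π i.succ := h0 ▸ hP.1 (Fin.succ_pos i)
    have hrow : Matrix.of (Fin.cons (Fin.cons 1 fun j => P 0 j.succ)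
        fun i => Fin.cons 0 fun j => P i.succ j.succ) = P := by
      funext i j
      refine Fin.cases (Fin.cases ?_ (fun _ => rfl) j) (fun i => Fin.cases ?_ (fun _ => rfl) j) i
      · exact (h0 ▸ hP.2.1 0).symm
      · exact (hP.2.2.1 i.succ 0 (hpos i)).symm
    have hpiv :
        (Fin.cons 0 fun i => ((π i.succ).pred (hpos i).ne').succ : Fin (r + 1) → _) = π :=
      funext fun i => Fin.cases h0.symm (fun i => Fin.succ_pred _ (hpos i).ne') i
    obtain ⟨hx, hv⟩ := (isRREF_cons_pivot_iff (N := Matrix.of fun i j => P i.succ j.succ)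
      (piv := fun i => (π i.succ).pred (hpos i).ne') (v := fun j => P 0 j.succ)).1 (by
        convert hP using 1
        exact hrow)
    exact ⟨⟨⟨(_, _), hx⟩, _, hv⟩, Subtype.ext (Subtype.ext (Prod.ext hrow hpiv))⟩

lemma card_rrefPair_succ_succ (r c : ℕ) :
    Nat.card (RrefPair Fq (r + 1) (c + 1))
      = Fintype.card Fq ^ (c - r) * Nat.card (RrefPair Fq r c)
        + Nat.card (RrefPair Fq (r + 1) c) := by
  rw [← Nat.card_congr (Equiv.sumCompl fun p : RrefPair Fq (r + 1) (c + 1) => p.1.2 0 = 0),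
    Nat.card_sum, card_rrefPair_firstPivot_eq_zero, card_rrefPair_firstPivot_ne_zero]

theorem card_rrefPair_eq_gaussQ (r c : ℕ) :
    (Nat.card (RrefPair Fq r c) : ℚ) = gaussQ (Fintype.card Fq) c r := by
  induction c generalizing r with
  | zero =>
    rcases r with _ | r
    · rw [card_rrefPair_zero_left, gaussQ_zero_right, Nat.cast_one]
    · rw [card_rrefPair_eq_zero_of_lt Fq r.succ_pos, gaussQ_eq_zero_of_lt r.succ_pos,
        Nat.cast_zero]
  | succ c ih =>
    rcases r with _ | r
    · rw [card_rrefPair_zero_left, gaussQ_zero_right, Nat.cast_one]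
    by_cases hrc : r ≤ c
    · rw [card_rrefPair_succ_succ, gaussQ_pascal Fintype.one_lt_card hrc]
      push_cast
      rw [ih, ih]
    · rw [card_rrefPair_eq_zero_of_lt Fq (by omega), gaussQ_eq_zero_of_lt (by omega),
        Nat.cast_zero]

end RrefCount

lemma card_submodule_eq_card_rrefPair {Fq : Type} [Field Fq] {k n : ℕ}
    (Q : Matrix (Fin k) (Fin n) Fq → (Fin k → Fin n) → Prop) :
    Nat.card {Y : Submodule Fq (Fin n → Fq) //
        ∃ (N : Matrix (Fin k) (Fin n) Fq) (piv' : Fin k → Fin n),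
        IsRREF N piv' ∧ Submodule.span Fq (Set.range fun i => N i) = Y ∧ Q N piv'}
      = Nat.card {p : RrefPair Fq k n // Q p.1.1 p.1.2} := by
  refine (Nat.card_eq_of_bijective (fun p => ⟨Submodule.span Fq (Set.range fun i => p.1.1.1 i),
    p.1.1.1, p.1.1.2, p.1.2, rfl, p.2⟩) ⟨fun p p' h => ?_, ?_⟩).symm
  · obtain ⟨hN, hpiv⟩ := p.1.2.eq_of_span_eq p'.1.2 (congrArg Subtype.val h)
    exact Subtype.ext (Subtype.ext (Prod.ext hN hpiv))
  · rintro ⟨Y, N, piv', hN, rfl, hQ⟩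
    exact ⟨⟨⟨(N, piv'), hN⟩, hQ⟩, rfl⟩

section ExtOrder

variable {Fq : Type} [Field Fq] [Fintype Fq] {k n : ℕ} (φ : Fq ≃ Fin (Fintype.card Fq))

/-- `ExtLt φ N piv' M piv` unfolds to `∃ c, ExtLtAt φ N piv' M piv c`. -/
def ExtLtAt (N : Matrix (Fin k) (Fin n) Fq) (piv' : Fin k → Fin n)
    (M : Matrix (Fin k) (Fin n) Fq) (piv : Fin k → Fin n) (c : Fin n) : Prop :=
  (∀ c' : Fin n, c < c' →
      (((∃ i, piv' i = c') ↔ (∃ i, piv i = c')) ∧ ∀ i, N i c' = M i c')) ∧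
    extVal φ N piv' c < extVal φ M piv c

variable {φ} {N M : Matrix (Fin k) (Fin n) Fq} {piv' piv : Fin k → Fin n}

lemma ExtLtAt.unique {c c' : Fin n} (h : ExtLtAt φ N piv' M piv c)
    (h' : ExtLtAt φ N piv' M piv c') : c = c' := by
  wlog hlt : c < c' generalizing c c'
  · rcases lt_or_eq_of_le (not_lt.1 hlt) with hlt' | heq
    · exact (this h' h hlt').symm
    · exact heq.symm
  obtain ⟨hpiv, hcol⟩ := h.1 c' hlt
  have heq : extVal φ N piv' c' = extVal φ M piv c' := by
    simp only [extVal, colVal, hpiv, hcol]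
  exact absurd h'.2 (heq ▸ lt_irrefl _)

end ExtOrder

lemma card_extLt_eq_sum {Fq : Type} [Field Fq] [Fintype Fq] {k n : ℕ}
    (φ : Fq ≃ Fin (Fintype.card Fq)) (M : Matrix (Fin k) (Fin n) Fq) (piv : Fin k → Fin n) :
    Nat.card {p : RrefPair Fq k n // ExtLt φ p.1.1 p.1.2 M piv}
      = ∑ c, Nat.card {p : RrefPair Fq k n // ExtLtAt φ p.1.1 p.1.2 M piv c} :=
  card_subtype_exists_eq_sum (fun c (p : RrefPair Fq k n) => ExtLtAt φ p.1.1 p.1.2 M piv c)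
    fun _ _ _ h h' => h.unique h'

section Pivots

variable {Fq : Type} [Field Fq] {k n : ℕ}

/-- The paper's `w_{j-1}` for the column `j = n - c`. -/
def pivotsRightOf (piv : Fin k → Fin n) (c : Fin n) : ℕ :=
  (Finset.univ.filter fun i => (c : ℕ) < (piv i : ℕ)).card

lemma pivotsRightOf_le (piv : Fin k → Fin n) (c : Fin n) : pivotsRightOf piv c ≤ k :=
  (Finset.card_filter_le _ _).trans_eq (Finset.card_fin k)

lemma sub_pivotsRightOf_le_iff {piv : Fin k → Fin n} (hpiv : Monotone piv) (c : Fin n)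
    (i : Fin k) : k - pivotsRightOf piv c ≤ i ↔ c < piv i := by
  have hup : IsUpperSet ((Finset.univ.filter fun i => (c : ℕ) < (piv i : ℕ) : Finset (Fin k)) :
      Set (Fin k)) := fun a b hab ha => by
    simp only [Finset.coe_filter, Finset.mem_univ, true_and, Set.mem_ofPred_eq] at ha ⊢
    exact lt_of_lt_of_le ha (hpiv hab)
  simpa [pivotsRightOf] using (Fin.mem_iff_le_of_isUpperSet hup i).symm

variable {N M : Matrix (Fin k) (Fin n) Fq} {piv' piv : Fin k → Fin n}

lemma IsRREF.pivot_eq_of_col_eq (hN : IsRREF N piv') (hM : IsRREF M piv) {c' : Fin n}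
    (hcol : ∀ i, N i c' = M i c') {i i' : Fin k} (hi : piv i = c') (hi' : piv' i' = c') :
    piv' i = c' := by
  have : N i (piv' i') ≠ 0 := by rw [hi', hcol, ← hi, hM.2.1]; exact one_ne_zero
  rw [hN.eq_of_apply_pivot_ne_zero this, hi']

end Pivots

namespace ExtLtAt

variable {Fq : Type} [Field Fq] [Fintype Fq] {k n : ℕ} {φ : Fq ≃ Fin (Fintype.card Fq)}
  {N M : Matrix (Fin k) (Fin n) Fq} {piv' piv : Fin k → Fin n} {c : Fin n}

lemma pivot_eq (hN : IsRREF N piv') (hM : IsRREF M piv) (h : ExtLtAt φ N piv' M piv c)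
    {i : Fin k} (hi : c < piv i) : piv' i = piv i := by
  obtain ⟨i', hi'⟩ := (h.1 _ hi).1.2 ⟨i, rfl⟩
  exact hN.pivot_eq_of_col_eq hM (h.1 _ hi).2 rfl hi'

lemma lt_pivot_iff (hN : IsRREF N piv') (hM : IsRREF M piv) (h : ExtLtAt φ N piv' M piv c)
    (i : Fin k) : c < piv' i ↔ c < piv i := by
  refine ⟨fun hi => ?_, fun hi => h.pivot_eq hN hM hi ▸ hi⟩
  obtain ⟨i', hi'⟩ := (h.1 _ hi).1.1 ⟨i, rfl⟩
  rwa [hM.pivot_eq_of_col_eq hN (fun j => ((h.1 _ hi).2 j).symm) rfl hi']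

lemma row_eq (hN : IsRREF N piv') (hM : IsRREF M piv) (h : ExtLtAt φ N piv' M piv c)
    {i : Fin k} (hi : c < piv i) : N i = M i := by
  funext j
  by_cases hj : c < j
  · exact (h.1 j hj).2 i
  · have hj' : (j : ℕ) < (piv i : ℕ) := lt_of_le_of_lt (not_lt.1 hj) hi
    rw [hN.2.2.1 i j (h.pivot_eq hN hM hi ▸ hj'), hM.2.2.1 i j hj']

/-- A pivot of `N` at `c` would either reproduce the pivot column of `M` there, or make the
identifying bit of `N` at `c` exceed that of `M`. -/
lemma pivot_ne (hN : IsRREF N piv') (hM : IsRREF M piv) (h : ExtLtAt φ N piv' M piv c)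
    (i : Fin k) : piv' i ≠ c := by
  intro hic
  have hlt := h.2
  by_cases hMc : ∃ i', piv i' = c
  · obtain ⟨i', hi'⟩ := hMc
    obtain rfl : i = i' := by
      rcases lt_trichotomy i i' with hii | hii | hii
      · have := (h.lt_pivot_iff hN hM i').1 (hic ▸ hN.1 hii)
        exact absurd hi' this.ne'
      · exact hii
      · have := (h.lt_pivot_iff hN hM i).2 (hi' ▸ hM.1 hii)
        exact absurd hic this.ne'
    have hcol (j : Fin k) : N j c = M j c := by
      rw [← hic, hN.apply_pivot, hic, ← hi', hM.apply_pivot]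
    simp only [extVal, colVal, hcol, if_pos (⟨i, hic⟩ : ∃ i', piv' i' = c),
      if_pos (⟨i, hi'⟩ : ∃ i', piv i' = c)] at hlt
    exact lt_irrefl _ hlt
  · have : colVal φ M c < Fintype.card Fq ^ k := colVal_eq_digitVal φ M c ▸ digitVal_lt φ _
    simp only [extVal, if_pos (⟨i, hic⟩ : ∃ i, piv' i = c), if_neg hMc] at hlt
    omega

end ExtLtAt

section ColumnBound

variable {Fq : Type} [Fintype Fq] {k n : ℕ} (φ : Fq ≃ Fin (Fintype.card Fq))

/-- The paper's `v_j q^{k-w_{j-1}} + (1-v_j) {X_j}/q^{w_{j-1}}` (see `columnBound_cast`). -/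
noncomputable def columnBound (M : Matrix (Fin k) (Fin n) Fq) (piv : Fin k → Fin n)
    (c : Fin n) : ℕ :=
  if ∃ i, piv i = c then Fintype.card Fq ^ (k - pivotsRightOf piv c)
  else digitVal φ fun i : Fin (k - pivotsRightOf piv c) => M (Fin.castLE (Nat.sub_le _ _) i) c

variable {φ} {N M : Matrix (Fin k) (Fin n) Fq} {piv' piv : Fin k → Fin n} {c : Fin n}

lemma columnBound_le : columnBound φ M piv c ≤ Fintype.card Fq ^ (k - pivotsRightOf piv c) := by
  unfold columnBound
  split_ifs
  exacts [le_rfl, (digitVal_lt φ _).le]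

variable [Field Fq]

lemma colVal_eq_mul_digitVal (hφ0 : (φ 0 : ℕ) = 0) (hN : IsRREF N piv') {r : ℕ} (hr : r ≤ k)
    (hpiv : ∀ i : Fin k, r ≤ (i : ℕ) → c < piv' i) :
    colVal φ N c
      = Fintype.card Fq ^ (k - r) * digitVal φ fun i : Fin r => N (Fin.castLE hr i) c :=
  (colVal_eq_digitVal φ N c).trans <|
    digitVal_eq_mul_of_tail φ hr fun i hi => by rw [hN.2.2.1 i c (hpiv i hi), hφ0]

lemma extVal_lt_iff (hφ0 : (φ 0 : ℕ) = 0) (hM : IsRREF M piv) (hN : IsRREF N piv')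
    (hne : ∀ i, piv' i ≠ c) (hpiv : ∀ i, c < piv' i ↔ c < piv i) :
    extVal φ N piv' c < extVal φ M piv c ↔
      digitVal φ (fun i : Fin (k - pivotsRightOf piv c) => N (Fin.castLE (Nat.sub_le _ _) i) c)
        < columnBound φ M piv c := by
  have hw := pivotsRightOf_le piv c
  have hbot (i : Fin k) (hi : k - pivotsRightOf piv c ≤ (i : ℕ)) : c < piv i :=
    (sub_pivotsRightOf_le_iff hM.1.monotone c i).1 hi
  have hq : 0 < Fintype.card Fq ^ pivotsRightOf piv c := pow_pos Fintype.card_pos _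
  have hsub : k - (k - pivotsRightOf piv c) = pivotsRightOf piv c := by omega
  rw [extVal, extVal, if_neg (not_exists.2 hne), zero_add,
    colVal_eq_mul_digitVal hφ0 hN _ fun i hi => (hpiv i).2 (hbot i hi), hsub, columnBound]
  split_ifs with hMc
  · refine iff_of_true ?_ (digitVal_lt φ _)
    calc _ < Fintype.card Fq ^ pivotsRightOf piv c * Fintype.card Fq ^ (k - pivotsRightOf piv c) :=
          Nat.mul_lt_mul_of_pos_left (digitVal_lt φ _) hq
      _ = Fintype.card Fq ^ k := by rw [← pow_add]; congr 1; omega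
      _ ≤ _ := Nat.le_add_right _ _
  · rw [zero_add, colVal_eq_mul_digitVal hφ0 hM _ hbot, hsub, Nat.mul_lt_mul_left hq]

lemma columnBound_cast (hφ0 : (φ 0 : ℕ) = 0) (hM : IsRREF M piv) :
    (columnBound φ M piv c : ℚ) = if ∃ i, piv i = c then
      (Fintype.card Fq : ℚ) ^ (k - pivotsRightOf piv c)
      else (colVal φ M c : ℚ) / (Fintype.card Fq : ℚ) ^ pivotsRightOf piv c := by
  have hsub : k - (k - pivotsRightOf piv c) = pivotsRightOf piv c := by
    have := pivotsRightOf_le piv c; omega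
  have hq : (Fintype.card Fq : ℚ) ^ pivotsRightOf piv c ≠ 0 := pow_ne_zero _ (by simp)
  unfold columnBound
  split_ifs
  · push_cast; rfl
  · rw [colVal_eq_mul_digitVal hφ0 hM (Nat.sub_le _ _)
      fun i hi => (sub_pivotsRightOf_le_iff hM.1.monotone c i).1 hi, hsub]
    push_cast
    field_simp

end ColumnBound

section Extension

variable {Fq : Type} {k n : ℕ} (M : Matrix (Fin k) (Fin n) Fq) (piv : Fin k → Fin n)
  (c : Fin n) {r : ℕ}

def extendAt (B : Matrix (Fin r) (Fin c) Fq) (β : Fin r → Fin c) (v : Fin r → Fq) :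
    Matrix (Fin k) (Fin n) Fq × (Fin k → Fin n) :=
  (Matrix.of fun i j =>
    if hi : (i : ℕ) < r then
      if hj : (j : ℕ) < c then B ⟨i, hi⟩ ⟨j, hj⟩
      else if j = c then v ⟨i, hi⟩ else M i j
    else M i j,
   fun i => if hi : (i : ℕ) < r then Fin.castLE c.isLt.le (β ⟨i, hi⟩) else piv i)

variable {M piv c} {B : Matrix (Fin r) (Fin c) Fq} {β : Fin r → Fin c} {v : Fin r → Fq}

lemma extendAt_fst_of_lt {i : Fin k} (hi : (i : ℕ) < r) {j : Fin n} (hj : (j : ℕ) < c) :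
    (extendAt M piv c B β v).1 i j = B ⟨i, hi⟩ ⟨j, hj⟩ := by
  simp [extendAt, hi, Fin.lt_def.2 hj]

lemma extendAt_fst_self {i : Fin k} (hi : (i : ℕ) < r) :
    (extendAt M piv c B β v).1 i c = v ⟨i, hi⟩ := by
  simp [extendAt, hi]

lemma extendAt_fst_of_gt (i : Fin k) {j : Fin n} (hj : c < j) :
    (extendAt M piv c B β v).1 i j = M i j := by
  simp [extendAt, not_lt.2 hj.le, hj.ne']

lemma extendAt_fst_of_ge {i : Fin k} (hi : r ≤ (i : ℕ)) (j : Fin n) :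
    (extendAt M piv c B β v).1 i j = M i j := by
  simp [extendAt, not_lt.2 hi]

lemma extendAt_snd_of_lt {i : Fin k} (hi : (i : ℕ) < r) :
    (extendAt M piv c B β v).2 i = Fin.castLE c.isLt.le (β ⟨i, hi⟩) := by
  simp [extendAt, hi]

lemma extendAt_snd_of_ge {i : Fin k} (hi : r ≤ (i : ℕ)) :
    (extendAt M piv c B β v).2 i = piv i := by
  simp [extendAt, not_lt.2 hi]

lemma extendAt_fst_castLE (hr : r ≤ k) (i : Fin r) (j : Fin c) :
    (extendAt M piv c B β v).1 (Fin.castLE hr i) (Fin.castLE c.isLt.le j) = B i j :=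
  extendAt_fst_of_lt (i := Fin.castLE hr i) i.isLt (j := Fin.castLE c.isLt.le j) j.isLt

lemma extendAt_fst_castLE_self (hr : r ≤ k) (i : Fin r) :
    (extendAt M piv c B β v).1 (Fin.castLE hr i) c = v i :=
  extendAt_fst_self (i := Fin.castLE hr i) i.isLt

lemma extendAt_snd_castLE (hr : r ≤ k) (i : Fin r) :
    (extendAt M piv c B β v).2 (Fin.castLE hr i) = Fin.castLE c.isLt.le (β i) :=
  extendAt_snd_of_lt (i := Fin.castLE hr i) i.isLt

lemma eq_of_extendAt_eq (hr : r ≤ k) {B' : Matrix (Fin r) (Fin c) Fq} {β' : Fin r → Fin c}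
    {v' : Fin r → Fq} (h : extendAt M piv c B β v = extendAt M piv c B' β' v') :
    B = B' ∧ β = β' ∧ v = v' := by
  have hrow (i : Fin r) := congrFun (congrArg Prod.fst h) (Fin.castLE hr i)
  refine ⟨funext fun i => funext fun j => ?_, funext fun i => Fin.castLE_injective c.isLt.le ?_,
    funext fun i => ?_⟩
  · simpa only [extendAt_fst_castLE] using congrFun (hrow i) (Fin.castLE c.isLt.le j)
  · simpa only [extendAt_snd_castLE] using congrFun (congrArg Prod.snd h) (Fin.castLE hr i)
  · simpa only [extendAt_fst_castLE_self] using congrFun (hrow i) c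

variable [Field Fq]

lemma isRREF_extendAt (hM : IsRREF M piv) (hrow : ∀ i : Fin k, r ≤ (i : ℕ) ↔ c < piv i)
    (hB : IsRREF B β) : IsRREF (extendAt M piv c B β v).1 (extendAt M piv c B β v).2 := by
  set P := extendAt M piv c B β v
  have htop {i : Fin k} (hi : (i : ℕ) < r) : (P.2 i : ℕ) < c := by
    rw [extendAt_snd_of_lt hi]; exact (β _).isLt
  have hβ {i : Fin k} (hi : (i : ℕ) < r) : (⟨P.2 i, htop hi⟩ : Fin c) = β ⟨i, hi⟩ :=
    Fin.ext (by simp [P, extendAt_snd_of_lt hi])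
  refine ⟨fun a b hab => ?_, fun i => ?_, fun i j hj => ?_, fun i i' hii => ?_⟩
  · rw [Fin.lt_def] at hab ⊢
    by_cases hb : (b : ℕ) < r
    · rw [extendAt_snd_of_lt hb, extendAt_snd_of_lt (hab.trans hb)]
      exact hB.1 (Fin.lt_def.2 hab)
    · rw [extendAt_snd_of_ge (not_lt.1 hb)]
      by_cases ha : (a : ℕ) < r
      · exact (htop ha).trans ((hrow b).1 (not_lt.1 hb))
      · rw [extendAt_snd_of_ge (not_lt.1 ha)]
        exact hM.1 (Fin.lt_def.2 hab)
  · by_cases hi : (i : ℕ) < r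
    · rw [extendAt_fst_of_lt hi (htop hi), hβ hi, hB.2.1]
    · rw [extendAt_fst_of_ge (not_lt.1 hi), extendAt_snd_of_ge (not_lt.1 hi), hM.2.1]
  · by_cases hi : (i : ℕ) < r
    · rw [extendAt_fst_of_lt hi (hj.trans (htop hi))]
      exact hB.2.2.1 _ _ (by simpa [P, extendAt_snd_of_lt hi] using hj)
    · rw [extendAt_snd_of_ge (not_lt.1 hi)] at hj
      rw [extendAt_fst_of_ge (not_lt.1 hi), hM.2.2.1 i j hj]
  · by_cases hi : (i : ℕ) < r
    · by_cases hi' : (i' : ℕ) < r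
      · rw [extendAt_fst_of_lt hi' (htop hi), hβ hi]
        exact hB.2.2.2 ⟨i, hi⟩ ⟨i', hi'⟩ (by simpa [Fin.ext_iff] using hii)
      · rw [extendAt_fst_of_ge (not_lt.1 hi')]
        exact hM.2.2.1 i' _ ((htop hi).trans ((hrow i').1 (not_lt.1 hi')))
    · have hc : c < P.2 i := by
        rw [extendAt_snd_of_ge (not_lt.1 hi)]; exact (hrow i).1 (not_lt.1 hi)
      rw [extendAt_fst_of_gt i' hc, extendAt_snd_of_ge (not_lt.1 hi), hM.2.2.2 i i' hii]

end Extension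

section CountAtColumn

variable {Fq : Type} [Field Fq] [Fintype Fq] {k n : ℕ} {φ : Fq ≃ Fin (Fintype.card Fq)}
  {M : Matrix (Fin k) (Fin n) Fq} {piv : Fin k → Fin n} {c : Fin n}

lemma extLtAt_extendAt (hφ0 : (φ 0 : ℕ) = 0) (hM : IsRREF M piv)
    {B : Matrix (Fin (k - pivotsRightOf piv c)) (Fin c) Fq}
    {β : Fin (k - pivotsRightOf piv c) → Fin c}
    {v : Fin (k - pivotsRightOf piv c) → Fq} (hB : IsRREF B β)
    (hv : digitVal φ v < columnBound φ M piv c) :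
    ExtLtAt φ (extendAt M piv c B β v).1 (extendAt M piv c B β v).2 M piv c := by
  set P := extendAt M piv c B β v
  have hrow (i : Fin k) := sub_pivotsRightOf_le_iff hM.1.monotone c i
  have htop {i : Fin k} (hi : (i : ℕ) < k - pivotsRightOf piv c) : P.2 i < c := by
    rw [Fin.lt_def, extendAt_snd_of_lt hi]; exact (β _).isLt
  have hpiv (i : Fin k) : c < P.2 i ↔ c < piv i := by
    by_cases hi : (i : ℕ) < k - pivotsRightOf piv c
    · exact iff_of_false (htop hi).asymm fun h => hi.not_ge ((hrow i).2 h)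
    · rw [extendAt_snd_of_ge (not_lt.1 hi)]
  have hbot {i : Fin k} (hi : c < P.2 i) : P.2 i = piv i :=
    extendAt_snd_of_ge ((hrow i).2 ((hpiv i).1 hi))
  refine ⟨fun c' hc' => ⟨⟨?_, ?_⟩, fun i => extendAt_fst_of_gt i hc'⟩, ?_⟩
  · rintro ⟨i, rfl⟩
    exact ⟨i, (hbot hc').symm⟩
  · rintro ⟨i, rfl⟩
    exact ⟨i, extendAt_snd_of_ge ((hrow i).2 hc')⟩
  · have hne (i : Fin k) : P.2 i ≠ c := by
      by_cases hi : (i : ℕ) < k - pivotsRightOf piv c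
      · exact (htop hi).ne
      · rw [extendAt_snd_of_ge (not_lt.1 hi)]
        exact ((hrow i).1 (not_lt.1 hi)).ne'
    refine (extVal_lt_iff hφ0 hM (isRREF_extendAt hM hrow hB) hne hpiv).2 ?_
    convert hv using 2
    funext i
    exact extendAt_fst_castLE_self _ i

lemma ExtLtAt.exists_extendAt_eq (hφ0 : (φ 0 : ℕ) = 0) (hM : IsRREF M piv)
    {N : Matrix (Fin k) (Fin n) Fq} {piv' : Fin k → Fin n} (hN : IsRREF N piv')
    (h : ExtLtAt φ N piv' M piv c) :
    ∃ (B : Matrix (Fin (k - pivotsRightOf piv c)) (Fin c) Fq)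
      (β : Fin (k - pivotsRightOf piv c) → Fin c) (v : Fin (k - pivotsRightOf piv c) → Fq),
      IsRREF B β ∧ digitVal φ v < columnBound φ M piv c ∧
        extendAt M piv c B β v = (N, piv') := by
  have hrow (i : Fin k) := sub_pivotsRightOf_le_iff hM.1.monotone c i
  have hr := Nat.sub_le k (pivotsRightOf piv c)
  have htop (i : Fin (k - pivotsRightOf piv c)) : piv' (Fin.castLE hr i) < c := by
    refine lt_of_le_of_ne (not_lt.1 fun hc => ?_) (h.pivot_ne hN hM _)
    exact absurd i.isLt (not_lt.2 ((hrow _).2 ((h.lt_pivot_iff hN hM _).1 hc)))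
  refine ⟨Matrix.of fun i j => N (Fin.castLE hr i) (Fin.castLE c.isLt.le j),
    fun i => ⟨piv' (Fin.castLE hr i), htop i⟩, fun i => N (Fin.castLE hr i) c,
    ⟨fun a b hab => hN.1 hab, fun i => hN.2.1 _, fun i j hj => hN.2.2.1 _ _ hj,
      fun i i' hii => hN.2.2.2 _ _ fun he => hii (Fin.castLE_injective hr he)⟩,
    (extVal_lt_iff hφ0 hM hN (h.pivot_ne hN hM) (h.lt_pivot_iff hN hM)).1 h.2,
    Prod.ext (funext fun i => funext fun j => ?_) (funext fun i => ?_)⟩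
  · by_cases hi : (i : ℕ) < k - pivotsRightOf piv c
    · rcases lt_trichotomy j c with hj | rfl | hj
      · exact extendAt_fst_of_lt hi hj
      · exact extendAt_fst_self hi
      · exact (extendAt_fst_of_gt i hj).trans ((h.1 j hj).2 i).symm
    · rw [extendAt_fst_of_ge (not_lt.1 hi)]
      exact congrFun (h.row_eq hN hM ((hrow i).1 (not_lt.1 hi))).symm j
  · by_cases hi : (i : ℕ) < k - pivotsRightOf piv c
    · exact extendAt_snd_of_lt hi
    · rw [extendAt_snd_of_ge (not_lt.1 hi)]
      exact (h.pivot_eq hN hM ((hrow i).1 (not_lt.1 hi))).symm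

theorem card_extLtAt (hφ0 : (φ 0 : ℕ) = 0) (hM : IsRREF M piv) :
    Nat.card {p : RrefPair Fq k n // ExtLtAt φ p.1.1 p.1.2 M piv c}
      = columnBound φ M piv c * Nat.card (RrefPair Fq (k - pivotsRightOf piv c) c) := by
  have hrow (i : Fin k) := sub_pivotsRightOf_le_iff hM.1.monotone c i
  rw [mul_comm, ← card_digitVal_lt φ columnBound_le, ← Nat.card_prod]
  refine (Nat.card_eq_of_bijective (fun x => ⟨⟨extendAt M piv c x.1.1.1 x.1.1.2 x.2.1,
    isRREF_extendAt hM hrow x.1.2⟩, extLtAt_extendAt hφ0 hM x.1.2 x.2.2⟩) ⟨?_, ?_⟩).symm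
  · rintro ⟨⟨⟨B, β⟩, hB⟩, v, hv⟩ ⟨⟨⟨B', β'⟩, hB'⟩, v', hv'⟩ h
    have hext : extendAt M piv c B β v = extendAt M piv c B' β' v' := congrArg (·.1.1) h
    obtain ⟨rfl, rfl, rfl⟩ := eq_of_extendAt_eq (Nat.sub_le _ _) hext
    rfl
  · rintro ⟨⟨⟨N, piv'⟩, hN⟩, h⟩
    obtain ⟨B, β, v, hB, hv, hext⟩ := h.exists_extendAt_eq hφ0 hM hN
    exact ⟨(⟨(B, β), hB⟩, ⟨v, hv⟩), Subtype.ext (Subtype.ext hext)⟩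

end CountAtColumn

theorem ext_lex_index_general (Fq : Type) [Field Fq] [Fintype Fq]
    (n k : ℕ)
    (φ : Fq ≃ Fin (Fintype.card Fq)) (hφ0 : (φ 0 : ℕ) = 0)
    (M : Matrix (Fin k) (Fin n) Fq) (piv : Fin k → Fin n) (hM : IsRREF M piv) :
    (Nat.card {Y : Submodule Fq (Fin n → Fq) //
        ∃ (N : Matrix (Fin k) (Fin n) Fq) (piv' : Fin k → Fin n),
          IsRREF N piv' ∧ Submodule.span Fq (Set.range fun i => N i) = Y ∧
          ExtLt φ N piv' M piv } : ℚ)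
      = ∑ c : Fin n,
          (if ∃ i, piv i = c then
              ((Fintype.card Fq : ℚ)) ^ (k - (Finset.univ.filter
                  (fun i => (c : ℕ) < (piv i : ℕ))).card)
            else (colVal φ M c : ℚ) / (Fintype.card Fq : ℚ) ^ ((Finset.univ.filter
                  (fun i => (c : ℕ) < (piv i : ℕ))).card))
            * gaussQ (Fintype.card Fq) (c : ℕ)
                (k - (Finset.univ.filter (fun i => (c : ℕ) < (piv i : ℕ))).card) := by
  rw [card_submodule_eq_card_rrefPair (fun N piv' => ExtLt φ N piv' M piv), card_extLt_eq_sum,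
    Nat.cast_sum]
  refine Finset.sum_congr rfl fun c _ => ?_
  rw [card_extLtAt hφ0 hM, Nat.cast_mul, card_rrefPair_eq_gaussQ, columnBound_cast hφ0 hM]
  rfl

/-- The lexicographic index of `X ∈ G_q(n,k)` in the extended-representation order:
the number of subspaces `Y < X` equals
`∑_{j=1}^n (v_j q^{k-w_{j-1}} + (1-v_j){X_j}/q^{w_{j-1}}) [n-j choose k-w_{j-1}]_q`.
Here column `c` of the Lean matrix corresponds to paper column `j = n - c`, so that
`n - j = c` and `w_{j-1}` is the number of pivots of `X` in columns `> c`. -/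
theorem ext_lex_index (Fq : Type) [Field Fq] [Fintype Fq]
    (n k : ℕ) (hk : k ≤ n)
    (φ : Fq ≃ Fin (Fintype.card Fq)) (hφ0 : (φ 0 : ℕ) = 0) (hφ1 : (φ 1 : ℕ) = 1)
    (M : Matrix (Fin k) (Fin n) Fq) (piv : Fin k → Fin n) (hM : IsRREF M piv) :
    (Nat.card {Y : Submodule Fq (Fin n → Fq) //
        ∃ (N : Matrix (Fin k) (Fin n) Fq) (piv' : Fin k → Fin n),
          IsRREF N piv' ∧ Submodule.span Fq (Set.range fun i => N i) = Y ∧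
          ExtLt φ N piv' M piv } : ℚ)
      = ∑ c : Fin n,
          (if ∃ i, piv i = c then
              ((Fintype.card Fq : ℚ)) ^ (k - (Finset.univ.filter
                  (fun i => (c : ℕ) < (piv i : ℕ))).card)
            else (colVal φ M c : ℚ) / (Fintype.card Fq : ℚ) ^ ((Finset.univ.filter
                  (fun i => (c : ℕ) < (piv i : ℕ))).card))
            * gaussQ (Fintype.card Fq) (c : ℕ)
                (k - (Finset.univ.filter (fun i => (c : ℕ) < (piv i : ℕ))).card) :=
  ext_lex_index_general Fq n k φ hφ0 M piv hM
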